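/- Let X be a finite connected graph of genus g and let G be a finite group acting harmonically on X (that is, G acts freely on the set of darts D(X)), possibly with invertible edges. Define g(X/G)_free = 1 − #(G-orbits on V(X)) + #(G-orbits on E(X) \ E^inv(X)), the genus of the factor graph obtained by deleting the loops arising from invertible edges. Then g − 1 = |G|·(g(X/G)_free − 1) + Σ_{v ∈ V(X)} (|G^v| − 1) + |E^inv(X)|. -/

import Mathlib

/-! An edge `{x, x̄}` is fixed by `g` only if `g` fixes `x` or swaps `x` and `x̄`. The first forces
`g = 1` because `G` acts freely on darts; the second makes the edge invertible. Hence `G` acts freely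
on the non-invertible edges, which number `|G|` times their orbits, while Burnside's count
`∑ᵥ |Gᵛ| = |G| · |V/G|` accounts for the vertices. What is left of `g - 1 = |E| - |V|` is
exactly `|E^inv|`. -/

namespace MulAction

variable {G α : Type*} [Group G] [MulAction G α]

variable (G α) in
theorem card_setOf_orbit :
    Nat.card {s : Set α | ∃ a, s = orbit G a} = Nat.card (orbitRel.Quotient G α) := by
  have : {s : Set α | ∃ a, s = orbit G a} = Set.range (orbitRel.Quotient.orbit (G := G)) := by
    ext s
    constructor
    · rintro ⟨a, rfl⟩
      exact ⟨Quotient.mk'' a, orbitRel.Quotient.orbit_mk a⟩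
    · rintro ⟨q, rfl⟩
      induction q using Quotient.inductionOn' with
      | h a => exact ⟨a, orbitRel.Quotient.orbit_mk a⟩
  rw [this, Nat.card_range_of_injective orbitRel.Quotient.orbit_injective]

theorem card_setOf_orbit_mem (p : SubMulAction G α) :
    Nat.card {s : Set α | ∃ a ∈ p, s = orbit G a} = Nat.card (orbitRel.Quotient G p) := by
  have : {s : Set α | ∃ a ∈ p, s = orbit G a}
      = Set.image Subtype.val '' {t : Set p | ∃ a, t = orbit G a} := by
    ext s
    constructor
    · rintro ⟨a, ha, rfl⟩
      exact ⟨_, ⟨⟨a, ha⟩, rfl⟩, SubMulAction.val_image_orbit _⟩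
    · rintro ⟨_, ⟨a, rfl⟩, rfl⟩
      exact ⟨a, a.2, SubMulAction.val_image_orbit a⟩
  rw [this, Nat.card_image_of_injective (Set.image_injective.mpr Subtype.val_injective),
    card_setOf_orbit]

variable (G α) in
theorem sum_card_stabilizer [Fintype α] [Finite G] :
    ∑ a : α, Nat.card (stabilizer G a) = Nat.card (orbitRel.Quotient G α) * Nat.card G := by
  have : (Σ a : α, stabilizer G a) ≃ Σ g : G, fixedBy α g :=
    (Equiv.subtypeProdEquivSigmaSubtype fun a g => g ∈ stabilizer G a).symm.trans <|
      ((Equiv.prodComm G α).subtypeEquiv fun _ => Iff.rfl).symm.trans <|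
        Equiv.subtypeProdEquivSigmaSubtype fun g a => g • a = a
  rw [← Nat.card_sigma, Nat.card_congr (this.trans (sigmaFixedByEquivOrbitsProdGroup G α)),
    Nat.card_prod]

theorem card_eq_card_quotient_mul_card_of_free [Finite α] [Finite G]
    (hfree : ∀ (g : G) (a : α), g • a = a → g = 1) :
    Nat.card α = Nat.card (orbitRel.Quotient G α) * Nat.card G := by
  have := Fintype.ofFinite α
  have hstab : ∀ a : α, Nat.card (stabilizer G a) = 1 := fun a =>
    Subgroup.card_eq_one.mpr <| (Subgroup.eq_bot_iff_forall _).mpr fun g hg => hfree g a hg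
  simp only [← sum_card_stabilizer G α, hstab, Finset.sum_const, smul_eq_mul, mul_one,
    Finset.card_univ, Nat.card_eq_fintype_card]

theorem card_eq_card_setOf_orbit_mem_mul_card_of_free [Finite α] [Finite G]
    (p : SubMulAction G α) (hfree : ∀ (g : G), ∀ a ∈ p, g • a = a → g = 1) :
    Nat.card p = Nat.card {s : Set α | ∃ a ∈ p, s = orbit G a} * Nat.card G := by
  rw [card_setOf_orbit_mem,
    card_eq_card_quotient_mul_card_of_free fun g (a : p) h => hfree g a a.2 (congrArg Subtype.val h)]

end MulAction

namespace Sym2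

variable {G α : Type*} [Group G] [MulAction G α]

instance instMulAction : MulAction G (Sym2 α) where
  smul g := Sym2.map (g • ·)
  one_smul e := by
    change Sym2.map _ e = e
    simp only [one_smul, Sym2.map_id', id]
  mul_smul g h e := by
    change Sym2.map _ e = Sym2.map _ (Sym2.map _ e)
    simp only [Sym2.map_map, Function.comp_def, mul_smul]

theorem smul_mk (g : G) (x y : α) : g • s(x, y) = s(g • x, g • y) := rfl

end Sym2

section DartEdges

variable {G D : Type*} [Group G] [MulAction G D] {bar : D → D}

def dartEdges (bar : D → D) : Set (Sym2 D) := {e | ∃ x, e = s(x, bar x)}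

variable (G) in
def invertibleEdges (bar : D → D) : Set (Sym2 D) :=
  {e | e ∈ dartEdges bar ∧ ∃ x ∈ e, ∃ g : G, g • x = bar x}

theorem eq_one_of_smul_eq_of_mem_sdiff_invertibleEdges
    (hfree : ∀ (g : G) (x : D), g • x = x → g = 1) {e : Sym2 D}
    (he : e ∈ dartEdges bar \ invertibleEdges G bar) {g : G} (hge : g • e = e) : g = 1 := by
  obtain ⟨⟨x, rfl⟩, hinv⟩ := he
  rw [Sym2.smul_mk] at hge
  rcases Sym2.eq_iff.mp hge with ⟨hgx, -⟩ | ⟨hgx, -⟩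
  · exact hfree g x hgx
  · exact absurd ⟨⟨x, rfl⟩, x, Sym2.mem_mk_left x (bar x), g, hgx⟩ hinv

variable (hbar : ∀ (g : G) (x : D), bar (g • x) = g • bar x)
include hbar

theorem smul_mem_dartEdges {e : Sym2 D} (he : e ∈ dartEdges bar) (g : G) :
    g • e ∈ dartEdges bar := by
  obtain ⟨x, rfl⟩ := he
  exact ⟨g • x, by rw [Sym2.smul_mk, hbar]⟩

theorem smul_mem_invertibleEdges {e : Sym2 D} (he : e ∈ invertibleEdges G bar) (g : G) :
    g • e ∈ invertibleEdges G bar := by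
  obtain ⟨he, x, hx, h, hhx⟩ := he
  refine ⟨smul_mem_dartEdges hbar he g, g • x, Sym2.mem_map.mpr ⟨x, hx, rfl⟩, g * h * g⁻¹, ?_⟩
  rw [mul_smul, mul_smul, inv_smul_smul, hhx, hbar]

def nonInvertibleEdges : SubMulAction G (Sym2 D) where
  carrier := dartEdges bar \ invertibleEdges G bar
  smul_mem' g e he :=
    ⟨smul_mem_dartEdges hbar he.1 g, fun hinv =>
      he.2 (inv_smul_smul g e ▸ smul_mem_invertibleEdges hbar hinv g⁻¹)⟩

end DartEdges

open MulAction

theorem riemann_hurwitz_harmonic_free_general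
    {V D G : Type} [Fintype V] [Fintype D]
    [Group G] [Fintype G] [MulAction G D] [MulAction G V]
    (bar : D → D)
    (hbar_equiv : ∀ (g : G) (x : D), bar (g • x) = g • bar x)
    (E : Set (Sym2 D)) (hE : E = {e : Sym2 D | ∃ x : D, e = Sym2.mk x (bar x)})
    (Einv : Set (Sym2 D))
    (hEinv : Einv = {e : Sym2 D | e ∈ E ∧ ∃ x ∈ e, ∃ g : G, g • x = bar x})
    (hharmonic : ∀ (g : G) (x : D), g • x = x → g = 1)
    (g gQ : ℤ)
    (hg : g = 1 - (Nat.card V : ℤ) + (Nat.card E : ℤ))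
    (hgQ : gQ = 1 - (Nat.card {s : Set V | ∃ v : V, s = MulAction.orbit G v} : ℤ) + (Nat.card {s : Set (Sym2 D) | ∃ e ∈ (E \ Einv), s = {e' : Sym2 D | ∃ g : G, Sym2.map (fun y => g • y) e = e'}} : ℤ)) :
    g - 1 = (Nat.card G : ℤ) * (gQ - 1)
      + (∑ᶠ v : V, ((Nat.card (MulAction.stabilizer G v) : ℤ) - 1))
      + (Nat.card Einv : ℤ) := by
  replace hE : E = dartEdges bar := hE
  subst hE
  replace hEinv : Einv = invertibleEdges G bar := hEinv
  subst hEinv hg hgQ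
  have hedges : (Nat.card (dartEdges bar) : ℤ)
      = Nat.card ↥(dartEdges bar \ invertibleEdges G bar) + Nat.card (invertibleEdges G bar) := by
    simp only [Nat.card_coe_set_eq]
    exact_mod_cast (Set.ncard_sdiff_add_ncard_of_subset
      (show invertibleEdges G bar ⊆ dartEdges bar from fun _ he => he.1)).symm
  have hfreeEdges : Nat.card ↥(dartEdges bar \ invertibleEdges G bar)
      = Nat.card {s : Set (Sym2 D) | ∃ e ∈ dartEdges bar \ invertibleEdges G bar, s = orbit G e}
        * Nat.card G :=
    card_eq_card_setOf_orbit_mem_mul_card_of_free (nonInvertibleEdges hbar_equiv)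
      fun _ _ he hge => eq_one_of_smul_eq_of_mem_sdiff_invertibleEdges hharmonic he hge
  have hstab : ∑ᶠ v : V, ((Nat.card (stabilizer G v) : ℤ) - 1)
      = Nat.card (orbitRel.Quotient G V) * Nat.card G - Nat.card V := by
    rw [finsum_eq_sum_of_fintype, Finset.sum_sub_distrib, ← Nat.cast_sum, sum_card_stabilizer]
    simp
  have horbit (e : Sym2 D) : {e' | ∃ g : G, Sym2.map (g • ·) e = e'} = orbit G e := rfl
  simp only [horbit]
  rw [hstab, card_setOf_orbit, hedges, hfreeEdges]
  push_cast
  ring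

/-- A finite graph `X = (D, V; I, bar)`: `D` the darts, `V` the vertices,
`I` the incidence function, `bar` the fixed-point-free dart-reversing involution.
A finite group `G` acts on `X` via automorphisms (equivariantly and faithfully).
The edge set `E` consists of the unordered pairs `{x, bar x}`. -/
theorem riemann_hurwitz_harmonic_free
    {V D G : Type} [Fintype V] [Fintype D] [Nonempty V]
    [Group G] [Fintype G] [MulAction G D] [MulAction G V]
    (I : D → V) (bar : D → D)
    (hbar_invol : ∀ x : D, bar (bar x) = x)
    (hbar_nofix : ∀ x : D, bar x ≠ x)
    (hI_equiv : ∀ (g : G) (x : D), I (g • x) = g • I x)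
    (hbar_equiv : ∀ (g : G) (x : D), bar (g • x) = g • bar x)
    (hfaithful : ∀ g : G, (∀ x : D, g • x = x) → (∀ v : V, g • v = v) → g = 1)
    (E : Set (Sym2 D)) (hE : E = {e : Sym2 D | ∃ x : D, e = Sym2.mk x (bar x)})
    (hconn : ∀ u v : V, Relation.ReflTransGen
      (fun a b : V => ∃ x : D, I x = a ∧ I (bar x) = b) u v)
    (Einv : Set (Sym2 D))
    (hEinv : Einv = {e : Sym2 D | e ∈ E ∧ ∃ x ∈ e, ∃ g : G, g • x = bar x})
    (hharmonic : ∀ (g : G) (x : D), g • x = x → g = 1)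
    (g gQ : ℤ)
    (hg : g = 1 - (Nat.card V : ℤ) + (Nat.card E : ℤ))
    (hgQ : gQ = 1 - (Nat.card {s : Set V | ∃ v : V, s = MulAction.orbit G v} : ℤ) + (Nat.card {s : Set (Sym2 D) | ∃ e ∈ (E \ Einv), s = {e' : Sym2 D | ∃ g : G, Sym2.map (fun y => g • y) e = e'}} : ℤ)) :
    g - 1 = (Nat.card G : ℤ) * (gQ - 1)
      + (∑ᶠ v : V, ((Nat.card (MulAction.stabilizer G v) : ℤ) - 1))
      + (Nat.card Einv : ℤ) :=
  riemann_hurwitz_harmonic_free_general bar hbar_equiv E hE Einv hEinv hharmonic g gQ hg hgQ
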